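/- arXiv:2302.03527 — 6 statements merged into one kernel-verified Lean document; each statement's English description precedes it below -/
import Mathlib

section
/- Let G be a graph and ≺ any linear order on V(G). For every r ∈ ℕ, the weak r-coloring number of the copy product cp(G) with respect to the extended order cp(≺) is at most twice the weak r-coloring number of G with respect to ≺: wcol_r(cp(G), cp(≺)) ≤ 2 · wcol_r(G, ≺). -/
variable {V : Type*}

/-- `x` lies in the closed `r`-ball around `c` in `G`. -/
def inBall (G : SimpleGraph V) (c : V) (r : ℕ) (x : V) : Prop :=
  ∃ p : G.Walk c x, p.length ≤ r

/-- The set of vertices weakly `r`-reachable from `v` with respect to the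
linear order `L`: endpoints of paths of length at most `r` from `v` on which
the endpoint is the minimum vertex. -/
def wreach (G : SimpleGraph V) (L : LinearOrder V) (r : ℕ) (v : V) : Set V :=
  {u | ∃ p : G.Walk v u, p.IsPath ∧ p.length ≤ r ∧ ∀ x ∈ p.support, L.le u x}

/-- The weak `r`-coloring number of `G` with respect to the order `L`. -/
noncomputable def wcolOrd [Fintype V] (G : SimpleGraph V) (L : LinearOrder V) (r : ℕ) : ℕ :=
  Finset.univ.sup fun v => (wreach G L r v).ncard

/-- The copy product `cp(G)`: the disjoint union of `G` with a copy of itself,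
where each vertex is joined to its copy and made a true twin of it.  The copy
of `v` is `(v, false)` and the original is `(v, true)`. -/
def cpGraph (G : SimpleGraph V) : SimpleGraph (Lex (V × Bool)) where
  Adj p q := G.Adj (ofLex p).1 (ofLex q).1 ∨
    ((ofLex p).1 = (ofLex q).1 ∧ (ofLex p).2 ≠ (ofLex q).2)
  symm := by
    constructor
    intro p q h
    rcases h with h | ⟨h1, h2⟩
    · exact Or.inl h.symm
    · exact Or.inr ⟨h1.symm, Ne.symm h2⟩
  loopless := by
    constructor
    intro p h
    rcases h with h | ⟨_, h2⟩
    · exact G.loopless.irrefl _ h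
    · exact h2 rfl

instance [Fintype V] : Fintype (Lex (V × Bool)) := inferInstanceAs (Fintype (V × Bool))

/-- The order `cp(≺)` on the copy product, inserting each copy `(v,false)`
immediately before the original `(v,true)`. -/
def cpOrder (L : LinearOrder V) : LinearOrder (Lex (V × Bool)) :=
  letI := L
  inferInstance

/-!
Projecting `cp(G)` onto `G` by forgetting the copy flag maps every walk to a walk of `G` that is
no longer (a step between a vertex and its copy is simply dropped) and visits only projections of
vertices of the original walk. Since `cp(≺)` compares the `G`-coordinates first, the minimality
of the endpoint survives the projection, so every vertex weakly `r`-reachable from `v` in `cp(G)`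
projects to a vertex weakly `r`-reachable from the projection of `v` in `G`. Each vertex of `G`
has exactly two preimages.
-/

def cpProj (p : Lex (V × Bool)) : V := (ofLex p).1

lemma exists_walk_cpProj {G : SimpleGraph V} {a b : Lex (V × Bool)} (p : (cpGraph G).Walk a b) :
    ∃ q : G.Walk (cpProj a) (cpProj b), q.length ≤ p.length ∧
      q.support ⊆ p.support.map cpProj := by
  induction p with
  | nil => exact ⟨.nil, le_rfl, by simp⟩
  | @cons a c b hadj p ih =>
    obtain ⟨q, hlen, hsupp⟩ := ih
    have hstep : G.Adj (cpProj a) (cpProj c) ∨ cpProj a = cpProj c := hadj.imp id And.left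
    rcases hstep with hadj | heq
    · refine ⟨.cons hadj q, by simpa using hlen, ?_⟩
      simpa using List.cons_subset_cons _ hsupp
    · refine ⟨q.copy heq.symm rfl, by simpa using hlen.trans (Nat.le_succ _), ?_⟩
      simpa using List.subset_cons_of_subset _ hsupp

lemma cpProj_le_cpProj_of_le (L : LinearOrder V) {u y : Lex (V × Bool)}
    (h : (cpOrder L).le u y) : L.le (cpProj u) (cpProj y) := by
  let _ := L
  rcases Prod.Lex.le_iff.mp h with hlt | ⟨heq, -⟩
  · exact hlt.le
  · exact heq.le

lemma cpProj_mem_wreach {G : SimpleGraph V} {L : LinearOrder V} {r : ℕ} {v u : Lex (V × Bool)}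
    (hu : u ∈ wreach (cpGraph G) (cpOrder L) r v) : cpProj u ∈ wreach G L r (cpProj v) := by
  obtain ⟨p, -, hlen, hmin⟩ := hu
  obtain ⟨q, hqlen, hsupp⟩ := exists_walk_cpProj p
  refine ⟨q.bypass, q.bypass_isPath, (q.length_bypass_le_length.trans hqlen).trans hlen, ?_⟩
  intro x hx
  obtain ⟨y, hy, rfl⟩ := List.mem_map.mp (hsupp (q.support_bypass_subset_support hx))
  exact cpProj_le_cpProj_of_le L (hmin y hy)

lemma ncard_preimage_cpProj (s : Set V) : (cpProj ⁻¹' s).ncard = 2 * s.ncard := by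
  have hpre : cpProj ⁻¹' s = ofLex ⁻¹' (s ×ˢ Set.univ) := by
    ext p
    simp [cpProj]
  rw [hpre, Set.ncard_preimage_of_injective_subset_range ofLex.injective
      (by simp [Set.range_eq_univ.mpr ofLex.surjective]),
    Set.ncard_prod, Set.ncard_univ, Nat.card_eq_fintype_card, Fintype.card_bool, mul_comm]

/-- `wcol_r(cp(G), cp(≺)) ≤ 2 ⬝ wcol_r(G, ≺)`. -/
theorem wcol_cpGraph_le [Fintype V] (G : SimpleGraph V) (L : LinearOrder V) (r : ℕ) :
    wcolOrd (cpGraph G) (cpOrder L) r ≤ 2 * wcolOrd G L r := by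
  refine Finset.sup_le fun v _ => ?_
  calc (wreach (cpGraph G) (cpOrder L) r v).ncard
      ≤ (cpProj ⁻¹' wreach G L r (cpProj v)).ncard :=
        Set.ncard_le_ncard (fun u hu => cpProj_mem_wreach hu) (Set.toFinite _)
    _ = 2 * (wreach G L r (cpProj v)).ncard := ncard_preimage_cpProj _
    _ ≤ 2 * wcolOrd G L r :=
        Nat.mul_le_mul_left 2 (Finset.le_sup (f := fun w => (wreach G L r w).ncard)
          (Finset.mem_univ _))
end

section
/- Every graph G admits an r-neighborhood cover with spread at most 2r and degree at most wcol_{2r}(G). -/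
variable {V : Type*}

/-- The weak `r`-coloring number of `G`: the minimum over all linear orders. -/
noncomputable def wcol [Fintype V] (G : SimpleGraph V) (r : ℕ) : ℕ :=
  sInf (Set.range fun L : LinearOrder V => wcolOrd G L r)

/-- An (non-weak) `r`-neighborhood cover of `G` with spread `s` and degree `d`:
every cluster induces a subgraph of radius at most `s` (witnessed by a center
`c ∈ X` joined to every vertex of `X` by a path of length `≤ s` staying in
`X`), the `r`-neighborhood of every vertex is contained in some cluster, and
every vertex lies in at most `d` clusters. -/
def IsCover (G : SimpleGraph V) (r s d : ℕ) (𝒳 : Set (Set V)) : Prop :=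
  (∀ X ∈ 𝒳, ∃ c ∈ X, ∀ x ∈ X,
    ∃ p : G.Walk c x, p.length ≤ s ∧ ∀ y ∈ p.support, y ∈ X) ∧
  (∀ w, ∃ X ∈ 𝒳, ∀ x, inBall G w r x → x ∈ X) ∧
  (∀ v, {X ∈ 𝒳 | v ∈ X}.ncard ≤ d)

open SimpleGraph

/-- Every graph `G` has an `r`-neighborhood cover with spread at most `2r` and
degree at most `wcol_{2r}(G)`. -/
theorem exists_cover_wcol [Fintype V] (G : SimpleGraph V) (r : ℕ) :
    ∃ 𝒳 : Set (Set V), IsCover G r (2 * r) (wcol G (2 * r)) 𝒳 := by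
  classical
  have hLne : Nonempty (LinearOrder V) :=
    ⟨@IsWellOrder.linearOrder V WellOrderingRel (WellOrderingRel.isWellOrder)⟩
  obtain ⟨L, hL⟩ : ∃ L : LinearOrder V, wcolOrd G L (2 * r) = wcol G (2 * r) :=
    Nat.sInf_mem (Set.range_nonempty _)
  set X : V → Set V := fun u => {x | u ∈ wreach G L (2 * r) x} with hX
  refine ⟨Set.range X, ?_, ?_, ?_⟩
  · -- spread
    rintro _ ⟨u, rfl⟩
    have huu : u ∈ X u := ⟨Walk.nil, Walk.IsPath.nil, by simp, by
      intro x hx; simp [Walk.support_nil] at hx; simp [hx]⟩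
    refine ⟨u, huu, ?_⟩
    rintro x ⟨p, hp, hlen, hmin⟩
    refine ⟨p.reverse, by simpa using hlen, ?_⟩
    intro y hy
    rw [Walk.support_reverse, List.mem_reverse] at hy
    exact ⟨p.dropUntil y hy, hp.dropUntil hy,
      le_trans (p.length_dropUntil_le hy) hlen,
      fun z hz => hmin z (p.support_dropUntil_subset hy hz)⟩
  · -- cover
    intro w
    letI := L
    have hBne : (setOf (inBall G w r)).Nonempty := ⟨w, Walk.nil, by simp⟩
    obtain ⟨u, huB, humin⟩ := Set.exists_min_image (setOf (inBall G w r)) id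
      (Set.toFinite _) hBne
    refine ⟨X u, ⟨u, rfl⟩, ?_⟩
    rintro x ⟨p, hp⟩
    obtain ⟨q, hq⟩ := huB
    -- walk from x to u through w
    set W : G.Walk x u := p.reverse.append q with hW
    have hWlen : W.length ≤ 2 * r := by
      simp only [hW, Walk.length_append, Walk.length_reverse]
      omega
    have hWsup : ∀ y ∈ W.support, y ∈ setOf (inBall G w r) := by
      intro y hy
      rw [hW, Walk.mem_support_append_iff] at hy
      rcases hy with hy | hy
      · rw [Walk.support_reverse, List.mem_reverse] at hy
        exact ⟨p.takeUntil y hy, le_trans (p.length_takeUntil_le hy) hp⟩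
      · exact ⟨q.takeUntil y hy, le_trans (q.length_takeUntil_le hy) hq⟩
    refine ⟨W.bypass, W.bypass_isPath, le_trans W.length_bypass_le hWlen, ?_⟩
    intro z hz
    exact humin z (hWsup z (W.support_bypass_subset hz))
  · -- degree
    intro v
    have hsub : {Y ∈ Set.range X | v ∈ Y} ⊆ X '' (wreach G L (2 * r) v) := by
      rintro Y ⟨⟨u, rfl⟩, hv⟩
      exact ⟨u, hv, rfl⟩
    calc {Y ∈ Set.range X | v ∈ Y}.ncard
        ≤ (X '' (wreach G L (2 * r) v)).ncard :=
          Set.ncard_le_ncard hsub (Set.toFinite _)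
      _ ≤ (wreach G L (2 * r) v).ncard := Set.ncard_image_le (Set.toFinite _)
      _ ≤ wcolOrd G L (2 * r) := Finset.le_sup (f := fun v => (wreach G L (2 * r) v).ncard) (Finset.mem_univ v)
      _ = wcol G (2 * r) := hL
end

section
/- Let G be a colored graph with tuples ā, ā', b̄, b̄' such that dist(ā, ā') > 2^k and dist(b̄, b̄') > 2^k. Then Duplicator wins the k-round local EF-game from position (G, ā ā', b̄ b̄') if and only if she wins both the k-round local EF-game from (G, ā, b̄) and from (G, ā', b̄'). -/
variable {V : Type*} {κ : Type*}

/-- `x` lies in the closed `r`-ball around the tuple `a` in `G`. -/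
def inBallT (G : SimpleGraph V) {n : ℕ} (a : Fin n → V) (r : ℕ) (x : V) : Prop :=
  ∃ i, inBall G (a i) r x

/-- The tuples `a` and `b` define a partial automorphism of `(G, col)`. -/
def IsPartialAuto (G : SimpleGraph V) (col : V → κ → Prop) {n : ℕ}
    (a b : Fin n → V) : Prop :=
  ∀ i j : Fin n,
    (a i = a j ↔ b i = b j) ∧ (∀ c, col (a i) c ↔ col (b i) c) ∧
    (G.Adj (a i) (a j) ↔ G.Adj (b i) (b j))

/-- Duplicator has a winning strategy in the `k`-round *local* EF-game on
`(G, col)` from position `(G, a, b, k)`: with `j+1` rounds remaining, a-moves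
are restricted to `N_{2^j}[ā]` and b-moves to `N_{2^j}[b̄]`. -/
def DWinsLocal (G : SimpleGraph V) (col : V → κ → Prop) :
    (k : ℕ) → {n : ℕ} → (Fin n → V) → (Fin n → V) → Prop
  | 0, _, a, b => IsPartialAuto G col a b
  | (k + 1), _, a, b =>
      (∀ x : V, inBallT G a (2 ^ k) x → ∃ y : V, inBallT G b (2 ^ k) y ∧
        DWinsLocal G col k (Fin.snoc a x) (Fin.snoc b y)) ∧
      (∀ y : V, inBallT G b (2 ^ k) y → ∃ x : V, inBallT G a (2 ^ k) x ∧
        DWinsLocal G col k (Fin.snoc a x) (Fin.snoc b y))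

/-!
Induction on `k`. With `k + 1` rounds left, a move within `2 ^ k` of `ā'` stays more than `2 ^ k`
away from `ā`, so after the move the two sides are still separated at the scale `2 ^ k` of the
remaining game and the induction hypothesis splits the new position. Duplicator's answer lands on
the matching side because winning the `k`-round game preserves distances up to `2 ^ k` (Spoiler
can play the midpoint of a path). Moves near `ā` reduce to this case by swapping the two halves,
which only permutes coordinates.
-/

open Function

section Balls

variable {G : SimpleGraph V} {u v w : V} {r s : ℕ}

lemma inBall_refl (G : SimpleGraph V) (u : V) (r : ℕ) : inBall G u r u :=
  ⟨.nil, Nat.zero_le r⟩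

lemma inBall_of_adj (h : G.Adj u v) : inBall G u 1 v :=
  ⟨h.toWalk, le_rfl⟩

lemma inBall.mono (h : inBall G u r v) (hrs : r ≤ s) : inBall G u s v :=
  let ⟨p, hp⟩ := h
  ⟨p, hp.trans hrs⟩

lemma inBall.symm (h : inBall G u r v) : inBall G v r u :=
  let ⟨p, hp⟩ := h
  ⟨p.reverse, by rwa [SimpleGraph.Walk.length_reverse]⟩

lemma inBall.trans (h₁ : inBall G u r v) (h₂ : inBall G v s w) : inBall G u (r + s) w :=
  let ⟨p, hp⟩ := h₁
  let ⟨q, hq⟩ := h₂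
  ⟨p.append q, by rw [SimpleGraph.Walk.length_append]; omega⟩

lemma eq_or_adj_of_inBall_one (h : inBall G u 1 v) : u = v ∨ G.Adj u v := by
  obtain ⟨p, hp⟩ := h
  rcases Nat.le_one_iff_eq_zero_or_eq_one.1 hp with h0 | h1
  exacts [.inl (p.eq_of_length_eq_zero h0), .inr (p.adj_of_length_eq_one h1)]

lemma exists_inBall_inBall_of_inBall_add (h : inBall G u (r + s) v) :
    ∃ w, inBall G u r w ∧ inBall G w s v := by
  obtain ⟨p, hp⟩ := h
  refine ⟨p.getVert r, ⟨p.take r, ?_⟩, ⟨p.drop r, ?_⟩⟩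
  · rw [SimpleGraph.Walk.take_length]; exact min_le_left _ _
  · rw [SimpleGraph.Walk.drop_length]; omega

lemma inBallT_append_iff {m m' : ℕ} {a : Fin m → V} {a' : Fin m' → V} :
    inBallT G (Fin.append a a') r v ↔ inBallT G a r v ∨ inBallT G a' r v := by
  constructor
  · rintro ⟨i, hi⟩
    induction i using Fin.addCases with
    | left i => exact .inl ⟨i, by simpa using hi⟩
    | right i => exact .inr ⟨i, by simpa using hi⟩
  · rintro (⟨i, hi⟩ | ⟨i, hi⟩)
    exacts [⟨Fin.castAdd m' i, by simpa using hi⟩, ⟨Fin.natAdd m i, by simpa using hi⟩]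

end Balls

/-- `dist(ā, ā') > r`. -/
def Separated (G : SimpleGraph V) (r : ℕ) {m m' : ℕ} (a : Fin m → V) (a' : Fin m' → V) : Prop :=
  ∀ i i', ¬ inBall G (a i) r (a' i')

namespace Separated

variable {G : SimpleGraph V} {r s m m' : ℕ} {a : Fin m → V} {a' : Fin m' → V}

lemma symm (h : Separated G r a a') : Separated G r a' a :=
  fun i' i hi => h i i' hi.symm

lemma mono (h : Separated G s a a') (hrs : r ≤ s) : Separated G r a a' :=
  fun i i' hi => h i i' (hi.mono hrs)

lemma ne (h : Separated G 1 a a') (i : Fin m) (i' : Fin m') : a i ≠ a' i' :=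
  fun e => h i i' (e ▸ inBall_refl G _ 1)

lemma not_adj (h : Separated G 1 a a') (i : Fin m) (i' : Fin m') : ¬ G.Adj (a i) (a' i') :=
  fun e => h i i' (inBall_of_adj e)

lemma snoc_right {x : V} (h : Separated G (r + s) a a') (hx : inBallT G a' s x) :
    Separated G r a (Fin.snoc a' x) := by
  obtain ⟨j, hj⟩ := hx
  intro i i'
  induction i' using Fin.lastCases with
  | last => simpa using fun hi => h i j (hi.trans hj.symm)
  | cast i' => simpa using (h.mono (Nat.le_add_right r s)) i i'

end Separated

lemma Fin.snoc_comp_snoc_castSucc_last {α : Type*} {n n' : ℕ} (a : Fin n → α) (x : α)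
    (e : Fin n' → Fin n) :
    Fin.snoc a x ∘ (Fin.snoc (Fin.castSucc ∘ e) (Fin.last n) : Fin (n' + 1) → Fin (n + 1)) =
      Fin.snoc (a ∘ e) x := by
  rw [Fin.comp_snoc]
  simp [Function.comp_def]

lemma Fin.surjective_snoc_castSucc_last {n n' : ℕ} {e : Fin n' → Fin n} (he : Surjective e) :
    Surjective (Fin.snoc (Fin.castSucc ∘ e) (Fin.last n) : Fin (n' + 1) → Fin (n + 1)) := by
  intro q
  induction q using Fin.lastCases with
  | last => exact ⟨Fin.last n', by simp⟩
  | cast i =>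
    obtain ⟨i', rfl⟩ := he i
    exact ⟨i'.castSucc, by simp⟩

lemma Fin.append_comp_finAddFlip {α : Type*} {m m' : ℕ} (a : Fin m → α) (a' : Fin m' → α) :
    Fin.append a a' ∘ finAddFlip = Fin.append a' a := by
  funext i
  induction i using Fin.addCases <;> simp

section Game

variable {G : SimpleGraph V} {col : V → κ → Prop}

lemma IsPartialAuto.comp {n n' : ℕ} {a b : Fin n → V} (h : IsPartialAuto G col a b)
    (e : Fin n' → Fin n) : IsPartialAuto G col (a ∘ e) (b ∘ e) :=
  fun i j => h (e i) (e j)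

lemma isPartialAuto_append_iff {m m' : ℕ} {a b : Fin m → V} {a' b' : Fin m' → V}
    (ha : Separated G 1 a a') (hb : Separated G 1 b b') :
    IsPartialAuto G col (Fin.append a a') (Fin.append b b') ↔
      IsPartialAuto G col a b ∧ IsPartialAuto G col a' b' := by
  constructor
  · intro h
    exact ⟨by simpa [comp_def] using h.comp (Fin.castAdd m'),
      by simpa [comp_def] using h.comp (Fin.natAdd m)⟩
  · rintro ⟨h, h'⟩ p q
    induction p using Fin.addCases with
    | left i =>
      induction q using Fin.addCases with
      | left j => simpa using h i j
      | right j =>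
        simpa using ⟨iff_of_false (ha.ne i j) (hb.ne i j), (h i i).2.1,
          iff_of_false (ha.not_adj i j) (hb.not_adj i j)⟩
    | right i =>
      induction q using Fin.addCases with
      | left j =>
        simpa using ⟨iff_of_false (ha.symm.ne i j) (hb.symm.ne i j), (h' i i).2.1,
          iff_of_false (ha.symm.not_adj i j) (hb.symm.not_adj i j)⟩
      | right j => simpa using h' i j

def LocalForth (G : SimpleGraph V) (col : V → κ → Prop) (k : ℕ) {n : ℕ} (a b : Fin n → V) :
    Prop :=
  ∀ x, inBallT G a (2 ^ k) x → ∃ y, inBallT G b (2 ^ k) y ∧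
    DWinsLocal G col k (Fin.snoc a x) (Fin.snoc b y)

lemma DWinsLocal.symm {k n : ℕ} {a b : Fin n → V} (h : DWinsLocal G col k a b) :
    DWinsLocal G col k b a := by
  induction k generalizing n a b with
  | zero => exact fun i j => ⟨(h i j).1.symm, fun c => ((h i j).2.1 c).symm, (h i j).2.2.symm⟩
  | succ k ih =>
    exact ⟨fun x hx => let ⟨y, hy, hw⟩ := h.2 x hx; ⟨y, hy, ih hw⟩,
      fun y hy => let ⟨x, hx, hw⟩ := h.1 y hy; ⟨x, hx, ih hw⟩⟩

lemma dWinsLocal_succ_iff {k n : ℕ} {a b : Fin n → V} :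
    DWinsLocal G col (k + 1) a b ↔ LocalForth G col k a b ∧ LocalForth G col k b a :=
  and_congr_right' <| forall₂_congr fun _ _ => exists_congr fun _ =>
    and_congr_right' ⟨DWinsLocal.symm, DWinsLocal.symm⟩

lemma DWinsLocal.comp {k n n' : ℕ} {a b : Fin n → V} (h : DWinsLocal G col k a b)
    {e : Fin n' → Fin n} (he : Surjective e) : DWinsLocal G col k (a ∘ e) (b ∘ e) := by
  induction k generalizing n n' a b e with
  | zero => exact IsPartialAuto.comp h e
  | succ k ih =>
    have forth : ∀ {a b : Fin n → V}, LocalForth G col k a b →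
        LocalForth G col k (a ∘ e) (b ∘ e) := by
      rintro a b hf x ⟨i, hi⟩
      obtain ⟨y, ⟨j, hj⟩, hw⟩ := hf x ⟨e i, hi⟩
      obtain ⟨j, rfl⟩ := he j
      refine ⟨y, ⟨j, hj⟩, ?_⟩
      simpa only [Fin.snoc_comp_snoc_castSucc_last] using
        ih hw (Fin.surjective_snoc_castSucc_last he)
    rw [dWinsLocal_succ_iff] at h ⊢
    exact ⟨forth h.1, forth h.2⟩

lemma DWinsLocal.map_inBall {k n : ℕ} {a b : Fin n → V} (h : DWinsLocal G col k a b)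
    (i j : Fin n) (hij : inBall G (a i) (2 ^ k) (a j)) : inBall G (b i) (2 ^ k) (b j) := by
  induction k generalizing n a b with
  | zero =>
    rcases eq_or_adj_of_inBall_one hij with heq | hadj
    · rw [(h i j).1.1 heq]; exact inBall_refl G _ _
    · exact inBall_of_adj ((h i j).2.2.1 hadj)
  | succ k ih =>
    rw [pow_succ, mul_two] at hij ⊢
    obtain ⟨x, hix, hxj⟩ := exists_inBall_inBall_of_inBall_add hij
    obtain ⟨y, -, hw⟩ := h.1 x ⟨i, hix⟩
    have hiy := ih hw i.castSucc (Fin.last n) (by simpa using hix)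
    have hyj := ih hw (Fin.last n) j.castSucc (by simpa using hxj)
    simp only [Fin.snoc_castSucc, Fin.snoc_last] at hiy hyj
    exact hiy.trans hyj

lemma DWinsLocal.of_succ {k n : ℕ} {a b : Fin n → V} (h : DWinsLocal G col (k + 1) a b) :
    DWinsLocal G col k a b := by
  induction k generalizing n a b with
  | zero =>
    intro i j
    obtain ⟨y, -, hw⟩ := h.1 (a i) ⟨i, inBall_refl G _ _⟩
    simpa using hw i.castSucc j.castSucc
  | succ k ih =>
    have forth : ∀ {a b : Fin n → V}, LocalForth G col (k + 1) a b → LocalForth G col k a b := by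
      rintro a b hf x ⟨i, hi⟩
      obtain ⟨y, -, hw⟩ := hf x ⟨i, hi.mono (Nat.pow_le_pow_right two_pos (Nat.le_succ k))⟩
      have hw' := ih hw
      refine ⟨y, ⟨i, ?_⟩, hw'⟩
      simpa using hw'.map_inBall i.castSucc (Fin.last n) (by simpa using hi)
    rw [dWinsLocal_succ_iff] at h ⊢
    exact ⟨forth h.1, forth h.2⟩

end Game

section Splitting

variable {G : SimpleGraph V} {col : V → κ → Prop}

lemma DWinsLocal.append_comm {k m m' : ℕ} {a b : Fin m → V} {a' b' : Fin m' → V}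
    (h : DWinsLocal G col k (Fin.append a a') (Fin.append b b')) :
    DWinsLocal G col k (Fin.append a' a) (Fin.append b' b) := by
  simpa only [Fin.append_comp_finAddFlip] using h.comp finAddFlip.surjective

lemma DWinsLocal.snoc_append_comm {k m m' : ℕ} {a b : Fin m → V} {a' b' : Fin m' → V} {x y : V}
    (h : DWinsLocal G col k (Fin.snoc (Fin.append a a') x) (Fin.snoc (Fin.append b b') y)) :
    DWinsLocal G col k (Fin.snoc (Fin.append a' a) x) (Fin.snoc (Fin.append b' b) y) := by
  simpa only [Fin.snoc_comp_snoc_castSucc_last, Fin.append_comp_finAddFlip] using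
    h.comp (Fin.surjective_snoc_castSucc_last finAddFlip.surjective)

def AppendSplits (G : SimpleGraph V) (col : V → κ → Prop) (k : ℕ) : Prop :=
  ∀ ⦃m m' : ℕ⦄ (a b : Fin m → V) (a' b' : Fin m' → V),
    Separated G (2 ^ k) a a' → Separated G (2 ^ k) b b' →
      (DWinsLocal G col k (Fin.append a a') (Fin.append b b') ↔
        DWinsLocal G col k a b ∧ DWinsLocal G col k a' b')

lemma appendSplits_zero : AppendSplits G col 0 :=
  fun _ _ _ _ _ _ ha hb => isPartialAuto_append_iff ha hb

namespace AppendSplits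

variable {k m m' : ℕ} {a b : Fin m → V} {a' b' : Fin m' → V}

lemma snoc_append_iff (ih : AppendSplits G col k) (ha : Separated G (2 ^ (k + 1)) a a')
    (hb : Separated G (2 ^ (k + 1)) b b') {x y : V} (hx : inBallT G a' (2 ^ k) x)
    (hy : inBallT G b' (2 ^ k) y) :
    DWinsLocal G col k (Fin.snoc (Fin.append a a') x) (Fin.snoc (Fin.append b b') y) ↔
      DWinsLocal G col k a b ∧ DWinsLocal G col k (Fin.snoc a' x) (Fin.snoc b' y) := by
  rw [pow_succ, mul_two] at ha hb
  rw [← Fin.append_snoc, ← Fin.append_snoc]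
  exact ih _ _ _ _ (ha.snoc_right hx) (hb.snoc_right hy)

lemma localForth_right (ih : AppendSplits G col k) (ha : Separated G (2 ^ (k + 1)) a a')
    (hb : Separated G (2 ^ (k + 1)) b b')
    (h : LocalForth G col k (Fin.append a a') (Fin.append b b')) :
    LocalForth G col k a' b' := by
  rintro x ⟨i, hi⟩
  obtain ⟨y, -, hw⟩ := h x (inBallT_append_iff.2 (.inr ⟨i, hi⟩))
  have hy : inBall G (b' i) (2 ^ k) y := by
    simpa only [Fin.snoc_castSucc, Fin.snoc_last, Fin.append_right] using
      hw.map_inBall (Fin.natAdd m i).castSucc (Fin.last _)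
        (by simpa only [Fin.snoc_castSucc, Fin.snoc_last, Fin.append_right] using hi)
  exact ⟨y, ⟨i, hy⟩, ((ih.snoc_append_iff ha hb ⟨i, hi⟩ ⟨i, hy⟩).1 hw).2⟩

lemma dWinsLocal_succ_right (ih : AppendSplits G col k) (ha : Separated G (2 ^ (k + 1)) a a')
    (hb : Separated G (2 ^ (k + 1)) b b')
    (h : DWinsLocal G col (k + 1) (Fin.append a a') (Fin.append b b')) :
    DWinsLocal G col (k + 1) a' b' := by
  rw [dWinsLocal_succ_iff] at h ⊢
  exact ⟨ih.localForth_right ha hb h.1, ih.localForth_right hb ha h.2⟩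

lemma exists_snoc_append_right (ih : AppendSplits G col k)
    (ha : Separated G (2 ^ (k + 1)) a a') (hb : Separated G (2 ^ (k + 1)) b b')
    (hab : DWinsLocal G col (k + 1) a b) (hab' : DWinsLocal G col (k + 1) a' b') {x : V}
    (hx : inBallT G a' (2 ^ k) x) : ∃ y, inBallT G b' (2 ^ k) y ∧
      DWinsLocal G col k (Fin.snoc (Fin.append a a') x) (Fin.snoc (Fin.append b b') y) := by
  obtain ⟨y, hy, hw⟩ := hab'.1 x hx
  exact ⟨y, hy, (ih.snoc_append_iff ha hb hx hy).2 ⟨hab.of_succ, hw⟩⟩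

lemma localForth_append (ih : AppendSplits G col k) (ha : Separated G (2 ^ (k + 1)) a a')
    (hb : Separated G (2 ^ (k + 1)) b b') (hab : DWinsLocal G col (k + 1) a b)
    (hab' : DWinsLocal G col (k + 1) a' b') :
    LocalForth G col k (Fin.append a a') (Fin.append b b') := by
  intro x hx
  rcases inBallT_append_iff.1 hx with hx | hx
  · obtain ⟨y, hy, hw⟩ := ih.exists_snoc_append_right ha.symm hb.symm hab' hab hx
    exact ⟨y, inBallT_append_iff.2 (.inl hy), hw.snoc_append_comm⟩
  · obtain ⟨y, hy, hw⟩ := ih.exists_snoc_append_right ha hb hab hab' hx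
    exact ⟨y, inBallT_append_iff.2 (.inr hy), hw⟩

lemma succ (ih : AppendSplits G col k) : AppendSplits G col (k + 1) := by
  intro m m' a b a' b' ha hb
  constructor
  · intro h
    exact ⟨ih.dWinsLocal_succ_right ha.symm hb.symm h.append_comm,
      ih.dWinsLocal_succ_right ha hb h⟩
  · rintro ⟨hab, hab'⟩
    rw [dWinsLocal_succ_iff]
    exact ⟨ih.localForth_append ha hb hab hab', ih.localForth_append hb ha hab.symm hab'.symm⟩

end AppendSplits

end Splitting

/-- If `dist(ā, ā') > 2^k` and `dist(b̄, b̄') > 2^k`, then Duplicator wins the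
`k`-round local EF-game on the concatenated tuples iff she wins it on both
pairs of tuples separately. -/
theorem dWinsLocal_append_iff (G : SimpleGraph V) (col : V → κ → Prop)
    {m m' : ℕ} (a b : Fin m → V) (a' b' : Fin m' → V) (k : ℕ)
    (ha : ∀ i i', ¬ inBall G (a i) (2 ^ k) (a' i'))
    (hb : ∀ i i', ¬ inBall G (b i) (2 ^ k) (b' i')) :
    DWinsLocal G col k (Fin.append a a') (Fin.append b b') ↔
      DWinsLocal G col k a b ∧ DWinsLocal G col k a' b' := by
  suffices ∀ k, AppendSplits G col k from this k a b a' b' ha hb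
  intro k
  induction k with
  | zero => exact appendSplits_zero
  | succ k ih => exact ih.succ
end

section
/- Suppose a graph G on n ≥ 5 vertices has a fractional weak r-neighborhood cover (𝒳, f) with degree d and spread s. Then G has a (non-fractional) weak r-neighborhood cover 𝒴 ⊆ 𝒳 (as a multiset of clusters from 𝒳) with degree at most 36·ln(n)·d and spread s. -/
open scoped Classical

variable {V : Type*}

/-- A fractional weak `r`-neighborhood cover of `G` with degree `d` and spread
`s`, given as an indexed family of clusters `X` with weights `f`. -/
def IsFracWeakCover (G : SimpleGraph V) [Fintype V] (r s : ℕ) (d : ℝ)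
    {I : Type*} [Fintype I] (X : I → Set V) (f : I → ℝ) : Prop :=
  (∀ i, 0 ≤ f i ∧ f i ≤ 1) ∧
  (∀ i, ∃ c, ∀ x ∈ X i, inBall G c s x) ∧
  (∀ v : V, 1 ≤ ∑ i ∈ Finset.univ.filter
      (fun i => ∀ x, inBall G v r x → x ∈ X i), f i) ∧
  (∀ v : V, ∑ i ∈ Finset.univ.filter (fun i => v ∈ X i), f i ≤ d)


/-!
Sample every cluster `X` independently `T = ⌈24 ln n⌉` times, keeping it each time with
probability `f X`, and let its multiplicity be the number of times it was kept. The clusters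
containing a vertex `v` are kept `≤ T d` times on average, so by Chernoff's bound (exponent `2/5`,
with `e^{2/5} ≤ 3/2`) more than `36 ln(n) d` of them are kept with probability at most `n⁻²`.
The clusters containing `N_r[u]` have total weight `≥ 1`, so none of them is kept with probability
at most `e^{-T/2} ≤ n⁻²`. The `2n` bad events thus have total probability at most `2/n < 1`.
The sample space is finite, so probabilities are weighted finite sums throughout.
-/

open Finset Real

section Bernoulli

variable {E : Type*} [Fintype E]

/-- The probability of `ω` when the coordinates `ω e` are independent coins with
`P(ω e = true) = p e`. -/
def bernoulliWeight (p : E → ℝ) (ω : E → Bool) : ℝ :=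
  ∏ e, if ω e then p e else 1 - p e

variable {p : E → ℝ}

lemma bernoulliWeight_nonneg (hp : ∀ e, 0 ≤ p e ∧ p e ≤ 1) (ω : E → Bool) :
    0 ≤ bernoulliWeight p ω :=
  prod_nonneg fun e _ => by split_ifs <;> linarith [hp e]

variable [DecidableEq E]

variable (p) in
lemma sum_bernoulliWeight_mul_prod (g : E → Bool → ℝ) :
    ∑ ω, bernoulliWeight p ω * ∏ e, g e (ω e) =
      ∏ e, ((1 - p e) * g e false + p e * g e true) := by
  calc ∑ ω, bernoulliWeight p ω * ∏ e, g e (ω e)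
      = ∑ ω : E → Bool, ∏ e, (if ω e then p e else 1 - p e) * g e (ω e) := by
        simp_rw [bernoulliWeight, ← prod_mul_distrib]
    _ = ∏ e, ∑ b, (if b then p e else 1 - p e) * g e b :=
        (Fintype.prod_sum fun e b => (if b then p e else 1 - p e) * g e b).symm
    _ = ∏ e, ((1 - p e) * g e false + p e * g e true) := by simp [add_comm]

variable (p) in
lemma sum_bernoulliWeight : ∑ ω, bernoulliWeight p ω = 1 := by
  simpa using sum_bernoulliWeight_mul_prod p fun _ _ => 1

lemma sum_bernoulliWeight_mul_exp_le (hp : ∀ e, 0 ≤ p e ∧ p e ≤ 1) (A : Finset E) (t : ℝ) :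
    ∑ ω, bernoulliWeight p ω * exp (t * ∑ e ∈ A, if ω e then 1 else 0) ≤
      exp ((exp t - 1) * ∑ e ∈ A, p e) := by
  have hexp : ∀ (q : E → ℝ), exp (∑ e ∈ A, q e) = ∏ e, if e ∈ A then exp (q e) else 1 :=
    fun q => by rw [exp_sum, prod_ite_mem, univ_inter]
  simp_rw [mul_sum, hexp]
  refine (sum_bernoulliWeight_mul_prod p
    fun e b => if e ∈ A then exp (t * if b then 1 else 0) else 1).trans_le ?_
  refine prod_le_prod (fun e _ => ?_) fun e _ => ?_
  · by_cases he : e ∈ A <;>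
      simp only [he, ↓reduceIte, Bool.false_eq_true, mul_zero, exp_zero, mul_one,
        sub_add_cancel, zero_le_one]
    nlinarith [hp e, exp_pos t]
  · by_cases he : e ∈ A <;>
      simp only [he, ↓reduceIte, Bool.false_eq_true, mul_zero, exp_zero, mul_one,
        sub_add_cancel, le_refl]
    linarith [add_one_le_exp ((exp t - 1) * p e)]

/-- Chernoff's bound for the number of successes in `A`. -/
lemma sum_bernoulliWeight_le_exp (hp : ∀ e, 0 ≤ p e ∧ p e ≤ 1) (A : Finset E) {t a : ℝ}
    {S : Finset (E → Bool)} (hS : ∀ ω ∈ S, a ≤ t * ∑ e ∈ A, if ω e then 1 else 0) :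
    ∑ ω ∈ S, bernoulliWeight p ω ≤ exp ((exp t - 1) * ∑ e ∈ A, p e - a) := by
  rw [exp_sub, le_div_iff₀ (exp_pos a), sum_mul]
  calc ∑ ω ∈ S, bernoulliWeight p ω * exp a
      ≤ ∑ ω ∈ S, bernoulliWeight p ω * exp (t * ∑ e ∈ A, if ω e then 1 else 0) :=
        sum_le_sum fun ω hω =>
          mul_le_mul_of_nonneg_left (exp_le_exp.2 (hS ω hω)) (bernoulliWeight_nonneg hp ω)
    _ ≤ ∑ ω, bernoulliWeight p ω * exp (t * ∑ e ∈ A, if ω e then 1 else 0) :=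
        sum_le_sum_of_subset_of_nonneg (subset_univ S) fun ω _ _ =>
          mul_nonneg (bernoulliWeight_nonneg hp ω) (exp_pos _).le
    _ ≤ exp ((exp t - 1) * ∑ e ∈ A, p e) := sum_bernoulliWeight_mul_exp_le hp A t

end Bernoulli

lemma exists_forall_not_of_sum_lt {Ω J : Type*} [Fintype Ω] [Fintype J] {w : Ω → ℝ}
    (hw : ∀ ω, 0 ≤ w ω) (P : J → Ω → Prop) [∀ j, DecidablePred (P j)]
    (h : ∑ j, ∑ ω with P j ω, w ω < ∑ ω, w ω) :
    ∃ ω, ∀ j, ¬ P j ω := by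
  by_contra! hcover
  refine h.not_ge ?_
  calc ∑ ω, w ω ≤ ∑ ω, ∑ j, if P j ω then w ω else 0 := sum_le_sum fun ω _ => by
        obtain ⟨j, hj⟩ := hcover ω
        calc w ω = if P j ω then w ω else 0 := (if_pos hj).symm
          _ ≤ ∑ j, if P j ω then w ω else 0 :=
            single_le_sum (f := fun j => if P j ω then w ω else 0)
              (fun j _ => by split_ifs <;> simp [hw]) (mem_univ j)
    _ = ∑ j, ∑ ω with P j ω, w ω := by
        rw [sum_comm]
        simp_rw [sum_filter]

lemma exp_two_fifths_le : exp (2 / 5) ≤ 3 / 2 := by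
  refine le_of_pow_le_pow_left₀ (n := 5) (by norm_num) (by norm_num) ?_
  rw [← exp_nat_mul, show ((5 : ℕ) : ℝ) * (2 / 5) = 1 + 1 by norm_num, exp_add]
  nlinarith [exp_one_lt_d9, exp_pos 1]

section Draws

variable {I : Type*} {T : ℕ}

/-- The multiplicity of `i` after `T` rounds of sampling, `ω (i, t)` recording whether
round `t` kept `i`. -/
def drawCount (ω : I × Fin T → Bool) (i : I) : ℕ := #{t | ω (i, t)}

lemma sum_drawCount (ω : I × Fin T → Bool) (A : Finset I) :
    ∑ i ∈ A, (drawCount ω i : ℝ) = ∑ e ∈ A ×ˢ univ, if ω e then 1 else 0 := by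
  rw [sum_product]
  simp only [drawCount, card_filter, Nat.cast_sum, Nat.cast_ite, Nat.cast_one, Nat.cast_zero]

lemma sum_product_univ_fst (f : I → ℝ) (A : Finset I) :
    ∑ e ∈ A ×ˢ (univ : Finset (Fin T)), f e.1 = T * ∑ i ∈ A, f i := by
  rw [sum_product]
  simp [mul_sum]

variable [Fintype I] {f : I → ℝ}

lemma sum_bernoulliWeight_drawCount_gt_le (hf : ∀ i, 0 ≤ f i ∧ f i ≤ 1) (A : Finset I)
    (a : ℝ) :
    ∑ ω with a < ∑ i ∈ A, (drawCount ω i : ℝ), bernoulliWeight (fun e : I × Fin T => f e.1) ω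
      ≤ exp (T * (∑ i ∈ A, f i) / 2 - 2 / 5 * a) := by
  refine (sum_bernoulliWeight_le_exp (fun e => hf e.1) (A ×ˢ univ) (t := 2 / 5)
    (a := 2 / 5 * a) fun ω hω => ?_).trans ?_
  · rw [← sum_drawCount]
    linarith [(mem_filter.1 hω).2]
  · rw [sum_product_univ_fst]
    have : 0 ≤ (T : ℝ) * ∑ i ∈ A, f i := mul_nonneg T.cast_nonneg (sum_nonneg fun i _ => (hf i).1)
    gcongr
    nlinarith [exp_two_fifths_le]

lemma sum_bernoulliWeight_drawCount_nonpos_le (hf : ∀ i, 0 ≤ f i ∧ f i ≤ 1)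
    (C : Finset I) :
    ∑ ω with ∑ i ∈ C, (drawCount ω i : ℝ) ≤ 0, bernoulliWeight (fun e : I × Fin T => f e.1) ω
      ≤ exp (-(T * ∑ i ∈ C, f i) / 2) := by
  refine (sum_bernoulliWeight_le_exp (fun e => hf e.1) (C ×ˢ univ) (t := -1)
    (a := 0) fun ω hω => ?_).trans ?_
  · rw [← sum_drawCount]
    linarith [(mem_filter.1 hω).2]
  · rw [sum_product_univ_fst]
    have : 0 ≤ (T : ℝ) * ∑ i ∈ C, f i := mul_nonneg T.cast_nonneg (sum_nonneg fun i _ => (hf i).1)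
    have : exp (-1) ≤ 1 / 2 := by
      rw [exp_neg, inv_le_comm₀ (exp_pos 1) (by norm_num)]
      linarith [add_one_le_exp (1 : ℝ)]
    gcongr
    nlinarith

lemma sum_bernoulliWeight_drawCount_bad_le (hf : ∀ i, 0 ≤ f i ∧ f i ≤ 1) {L d : ℝ}
    (hL : 5 / 4 ≤ L) (hd : 1 ≤ d) (hT : 24 * L ≤ T) (hT' : (T : ℝ) ≤ 24 * L + 1)
    {A C : Finset I} (hA : ∑ i ∈ A, f i ≤ d) (hC : 1 ≤ ∑ i ∈ C, f i) :
    ∑ ω with 36 * L * d < ∑ i ∈ A, (drawCount ω i : ℝ) ∨ ∑ i ∈ C, (drawCount ω i : ℝ) ≤ 0,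
      bernoulliWeight (fun e : I × Fin T => f e.1) ω ≤ 2 * exp (-2 * L) := by
  have hAT : T * ∑ i ∈ A, f i ≤ (24 * L + 1) * d :=
    mul_le_mul hT' hA (sum_nonneg fun i _ => (hf i).1) (by linarith)
  have hCT : 24 * L ≤ T * ∑ i ∈ C, f i := by nlinarith
  rw [filter_or, two_mul]
  refine (le_add_of_nonneg_right (sum_nonneg fun ω _ => bernoulliWeight_nonneg (fun e => hf e.1) ω)
    ).trans (sum_union_inter.trans_le (add_le_add ?_ ?_))
  · refine (sum_bernoulliWeight_drawCount_gt_le hf A _).trans (exp_le_exp.2 ?_)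
    nlinarith
  · refine (sum_bernoulliWeight_drawCount_nonpos_le hf C).trans (exp_le_exp.2 ?_)
    linarith

end Draws

theorem exists_rounding_of_fractional_cover {I J : Type*} [Fintype I] [Fintype J]
    (hJ : 4 ≤ Fintype.card J) {f : I → ℝ} (hf : ∀ i, 0 ≤ f i ∧ f i ≤ 1) {d : ℝ} (hd : 1 ≤ d)
    (A C : J → Finset I) (hA : ∀ j, ∑ i ∈ A j, f i ≤ d) (hC : ∀ j, 1 ≤ ∑ i ∈ C j, f i) :
    ∃ m : I → ℕ, (∀ j, ∃ i ∈ C j, 1 ≤ m i) ∧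
      ∀ j, ∑ i ∈ A j, (m i : ℝ) ≤ 36 * log (Fintype.card J) * d := by
  set n : ℝ := (Fintype.card J : ℝ)
  set L := log n
  have hn : 4 ≤ n := Nat.ofNat_le_cast.2 hJ
  have hL : 5 / 4 ≤ L := calc
    (5 / 4 : ℝ) ≤ 2 * log 2 := by linarith [log_two_gt_d9]
    _ = log (2 ^ 2) := (log_pow 2 2).symm
    _ ≤ L := log_le_log (by norm_num) (by linarith)
  obtain ⟨T, hT, hT'⟩ : ∃ T : ℕ, 24 * L ≤ T ∧ (T : ℝ) ≤ 24 * L + 1 :=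
    ⟨⌈24 * L⌉₊, Nat.le_ceil _, (Nat.ceil_lt_add_one (by positivity)).le⟩
  have hexp : exp (-2 * L) = (n ^ 2)⁻¹ := by
    rw [show -2 * L = -log (n ^ 2) by rw [log_pow]; push_cast; ring, exp_neg,
      exp_log (by positivity)]
  obtain ⟨ω, hω⟩ := exists_forall_not_of_sum_lt
    (bernoulliWeight_nonneg fun e : I × Fin T => hf e.1)
    (fun j ω => 36 * L * d < ∑ i ∈ A j, (drawCount ω i : ℝ) ∨
      ∑ i ∈ C j, (drawCount ω i : ℝ) ≤ 0) <| calc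
    _ ≤ ∑ _j : J, 2 * exp (-2 * L) := sum_le_sum fun j _ =>
        sum_bernoulliWeight_drawCount_bad_le hf hL hd hT hT' (hA j) (hC j)
    _ = n * (2 * (n ^ 2)⁻¹) := by rw [sum_const, card_univ, nsmul_eq_mul, hexp]
    _ = 2 / n := by field_simp
    _ < 1 := by rw [div_lt_one (by positivity)]; linarith
    _ = _ := (sum_bernoulliWeight _).symm
  simp only [not_or, not_lt, not_le] at hω
  refine ⟨drawCount ω, fun j => ?_, fun j => (hω j).1⟩
  obtain ⟨i, hi, hpos⟩ := exists_lt_of_sum_lt (f := fun _ => (0 : ℝ)) (by simpa using (hω j).2)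
  exact ⟨i, hi, Nat.cast_pos.1 hpos⟩

/-- If a graph on `n ≥ 5` vertices has a fractional weak `r`-neighborhood cover
`(𝒳, f)` with degree `d` and spread `s`, then it has a (non-fractional) weak
`r`-neighborhood cover with degree `36 · ln n · d` and spread `s`, obtained as
a sub-multiset of `𝒳` (given by multiplicities `m : I → ℕ`). -/
theorem weakCover_of_fracWeakCover [Fintype V] (G : SimpleGraph V)
    (hn : 5 ≤ Fintype.card V) (r s : ℕ) (d : ℝ)
    {I : Type*} [Fintype I] (X : I → Set V) (f : I → ℝ)
    (h : IsFracWeakCover G r s d X f) :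
    ∃ m : I → ℕ,
      -- the r-neighborhood of every vertex is contained in a chosen cluster
      (∀ w : V, ∃ i, 1 ≤ m i ∧ ∀ x, inBall G w r x → x ∈ X i) ∧
      -- every vertex lies in at most 36 ln(n) d chosen clusters (with multiplicity)
      (∀ v : V, (∑ i ∈ Finset.univ.filter (fun i => v ∈ X i), (m i : ℝ)) ≤
        36 * Real.log (Fintype.card V) * d) := by
  obtain ⟨hf, -, hcov, hdeg⟩ := h
  have hd : 1 ≤ d := by
    obtain ⟨v⟩ : Nonempty V := Fintype.card_pos_iff.mp (by omega)
    have hsub : ({i | ∀ x, inBall G v r x → x ∈ X i} : Finset I) ⊆ ({i | v ∈ X i} : Finset I) :=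
      monotone_filter_right _ fun _ _ hi => hi v ⟨.nil, by simp⟩
    exact (hcov v).trans
      ((sum_le_sum_of_subset_of_nonneg hsub fun i _ _ => (hf i).1).trans (hdeg v))
  obtain ⟨m, hcover, hdegree⟩ := exists_rounding_of_fractional_cover (by omega) hf hd
    (fun v => {i | v ∈ X i}) (fun v => {i | ∀ x, inBall G v r x → x ∈ X i}) hdeg hcov
  refine ⟨m, fun w => ?_, hdegree⟩
  obtain ⟨i, hi, hmi⟩ := hcover w
  exact ⟨i, hmi, (mem_filter.1 hi).2⟩
end

section
/- Any solution of value d to the LP relaxation of the weak neighborhood-cover ILP on a graph G can be converted into a fractional weak r-neighborhood cover of G with degree at most d+1 and spread s. Concretely: given reals 0 ≤ p_{vw}, q_{uw} ≤ 1 for u,v,w ∈ V(G) satisfying (1) Σ_{w : N_r[v] ⊆ N_s[w]} p_{vw} ≥ 1 for all v; (2) Σ_w q_{uw} ≤ d for all u; (3) q_{uw} ≥ p_{vw} for all v,w and all u ∈ N_r[v]; (4) q_{uw} = 0 whenever u ∉ N_s[w]; there exists a fractional weak r-neighborhood cover of G with degree d+1 and spread s whose clusters are the level sets X_w^i = {u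 : ⌈n·q_{uw}⌉ ≥ i} for w ∈ V(G), i ∈ [n], each with weight 1/n, where n = |V(G)|. -/
open scoped Classical

variable {V : Type*}

/-
Slice each `q u w` into `n` levels of height `1 / n`. A vertex `u` lies in exactly
`min n ⌈n q u w⌉` of the clusters `X_w^i`, at most `n q u w + 1`, so summing over the
`n` centres `w` costs only an additive `1` in the degree. Conversely, by (3) every
`X_w^i` with `i ≤ ⌈n p v w⌉` contains `N_r[v]`, and these account for weight at least
`p v w`, so (1) gives coverage. Clusters lie in `N_s[w]` by (4).
-/

open Finset

lemma Fin.card_filter_add_one_le (n m : ℕ) : #{k : Fin n | (k : ℕ) + 1 ≤ m} = min n m := by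
  simp only [Nat.add_one_le_iff]
  convert Fin.card_filter_val_lt

lemma Finset.card_filter_prod {α β : Type*} [Fintype α] [Fintype β] (P : α × β → Prop)
    [DecidablePred P] :
    #{i | P i} = ∑ a, #{b | P (a, b)} := by
  simp only [card_eq_sum_ones, sum_filter, Fintype.sum_prod_type]

lemma mul_le_min_natCeil_mul {n : ℕ} {x : ℝ} (hx : x ≤ 1) :
    n * x ≤ (min n ⌈n * x⌉₊ : ℕ) := by
  push_cast
  exact le_min (mul_le_of_le_one_right n.cast_nonneg hx) (Nat.le_ceil _)

lemma min_natCeil_mul_le {n : ℕ} {x : ℝ} (hx : 0 ≤ x) :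
    ((min n ⌈n * x⌉₊ : ℕ) : ℝ) ≤ n * x + 1 := by
  push_cast
  exact (min_le_right _ _).trans (Nat.ceil_lt_add_one (by positivity)).le

lemma inBall_self (G : SimpleGraph V) (v : V) (r : ℕ) : inBall G v r v :=
  ⟨.nil, Nat.zero_le r⟩

section levelCluster

variable (n : ℕ) (q : V → V → ℝ)

def levelCluster (wi : V × Fin n) : Set V :=
  {u | (wi.2 : ℕ) + 1 ≤ ⌈(n : ℝ) * q u wi.1⌉₊}

lemma inBall_of_mem_levelCluster (G : SimpleGraph V) (s : ℕ)
    (hq : ∀ u w, ¬ inBall G w s u → q u w = 0) {wi : V × Fin n} {u : V}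
    (hu : u ∈ levelCluster n q wi) : inBall G wi.1 s u := by
  by_contra h
  simp [levelCluster, hq u wi.1 h] at hu

lemma card_levelCluster_mem (u w : V) [DecidablePred fun k => u ∈ levelCluster n q (w, k)] :
    #{k | u ∈ levelCluster n q (w, k)} = min n ⌈n * q u w⌉₊ := by
  convert Fin.card_filter_add_one_le n ⌈(n : ℝ) * q u w⌉₊ using 3
  exact Iff.rfl

variable [Fintype V]

lemma card_levelClusters_mem_le (u : V) (hq : ∀ w, 0 ≤ q u w) :
    (#{i | u ∈ levelCluster n q i} : ℝ) ≤ n * ∑ w, q u w + Fintype.card V := by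
  rw [card_filter_prod]
  push_cast
  calc ∑ w, ((#{k | u ∈ levelCluster n q (w, k)} : ℕ) : ℝ)
      = ∑ w, ((min n ⌈n * q u w⌉₊ : ℕ) : ℝ) := by simp only [card_levelCluster_mem]
    _ ≤ ∑ w, ((n : ℝ) * q u w + 1) := sum_le_sum fun w _ => min_natCeil_mul_le (hq w)
    _ = n * ∑ w, q u w + Fintype.card V := by
      rw [sum_add_distrib, mul_sum, sum_const, card_univ, nsmul_one]

lemma mul_sum_le_card_levelClusters_supset_ball (G : SimpleGraph V) (p : V → V → ℝ) (r : ℕ)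
    (hq : ∀ u w, q u w ≤ 1) (hpq : ∀ v w u, inBall G v r u → p v w ≤ q u w)
    (v : V) (F : Finset V) :
    n * ∑ w ∈ F, p v w ≤ #{i | ∀ x, inBall G v r x → x ∈ levelCluster n q i} := by
  rw [card_filter_prod, mul_sum]
  push_cast
  calc ∑ w ∈ F, n * p v w
      ≤ ∑ w ∈ F, ((min n ⌈n * p v w⌉₊ : ℕ) : ℝ) := sum_le_sum fun w _ =>
        mul_le_min_natCeil_mul ((hpq v w v (inBall_self G v r)).trans (hq v w))
    _ ≤ ∑ w ∈ F, (#{k | ∀ x, inBall G v r x → x ∈ levelCluster n q (w, k)} : ℝ) := by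
      gcongr with w _
      rw [← Fin.card_filter_add_one_le]
      refine card_le_card fun k hk => ?_
      simp only [mem_filter_univ] at hk ⊢
      exact fun x hx => hk.trans (Nat.ceil_mono (by gcongr; exact hpq v w x hx))
    _ ≤ _ := sum_le_sum_of_subset_of_nonneg (subset_univ F) fun _ _ _ => by positivity

end levelCluster

theorem fracWeakCover_of_LP_general [Fintype V] (G : SimpleGraph V) (r s : ℕ) (d : ℝ)
    (p q : V → V → ℝ)
    (hq : ∀ u w, 0 ≤ q u w ∧ q u w ≤ 1)
    -- (1)
    (h1 : ∀ v : V, 1 ≤ ∑ w ∈ Finset.univ.filter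
      (fun w => ∀ x, inBall G v r x → inBall G w s x), p v w)
    -- (2)
    (h2 : ∀ u : V, ∑ w, q u w ≤ d)
    -- (3)
    (h3 : ∀ v w u : V, inBall G v r u → p v w ≤ q u w)
    -- (4)
    (h4 : ∀ u w : V, ¬ inBall G w s u → q u w = 0) :
    IsFracWeakCover G r s (d + 1)
      (fun wi : V × Fin (Fintype.card V) =>
        {u : V | (wi.2 : ℕ) + 1 ≤ ⌈(Fintype.card V : ℝ) * q u wi.1⌉₊})
      (fun _ => 1 / (Fintype.card V : ℝ)) := by
  set n := Fintype.card V
  change IsFracWeakCover G r s (d + 1) (levelCluster n q) fun _ => 1 / (n : ℝ)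
  refine ⟨fun wi => ?_, fun wi => ⟨wi.1, fun x => inBall_of_mem_levelCluster n q G s h4⟩,
    fun v => ?_, fun u => ?_⟩
  · have hn : 1 ≤ n := Fintype.card_pos_iff.mpr ⟨wi.1⟩
    exact ⟨by positivity, div_le_one_of_le₀ (mod_cast hn) n.cast_nonneg⟩
  · have hn : (0 : ℝ) < n := mod_cast Fintype.card_pos_iff.mpr ⟨v⟩
    rw [sum_const, nsmul_eq_mul, mul_one_div, le_div_iff₀ hn, one_mul]
    exact (le_mul_of_one_le_right hn.le (h1 v)).trans
      (mul_sum_le_card_levelClusters_supset_ball n q G p r (fun u w => (hq u w).2) h3 v _)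
  · have hn : (0 : ℝ) < n := mod_cast Fintype.card_pos_iff.mpr ⟨u⟩
    rw [sum_const, nsmul_eq_mul, mul_one_div, div_le_iff₀ hn]
    have hcard := card_levelClusters_mem_le n q u (fun w => (hq u w).1)
    have hsum := mul_le_mul_of_nonneg_left (h2 u) hn.le
    linarith

/-- Any solution of value `d` to the LP relaxation of the weak neighborhood
cover ILP yields a fractional weak `r`-neighborhood cover with degree `d + 1`
and spread `s`, whose clusters are the level sets
`X_w^i = {u : ⌈n·q_{uw}⌉ ≥ i}`, each with weight `1/n`. -/
theorem fracWeakCover_of_LP [Fintype V] (G : SimpleGraph V) (r s : ℕ) (d : ℝ)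
    (p q : V → V → ℝ)
    (hp : ∀ v w, 0 ≤ p v w ∧ p v w ≤ 1) (hq : ∀ u w, 0 ≤ q u w ∧ q u w ≤ 1)
    -- (1)
    (h1 : ∀ v : V, 1 ≤ ∑ w ∈ Finset.univ.filter
      (fun w => ∀ x, inBall G v r x → inBall G w s x), p v w)
    -- (2)
    (h2 : ∀ u : V, ∑ w, q u w ≤ d)
    -- (3)
    (h3 : ∀ v w u : V, inBall G v r u → p v w ≤ q u w)
    -- (4)
    (h4 : ∀ u w : V, ¬ inBall G w s u → q u w = 0) :
    IsFracWeakCover G r s (d + 1)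
      (fun wi : V × Fin (Fintype.card V) =>
        {u : V | (wi.2 : ℕ) + 1 ≤ ⌈(Fintype.card V : ℝ) * q u wi.1⌉₊})
      (fun _ => 1 / (Fintype.card V : ℝ)) :=
  fracWeakCover_of_LP_general G r s d p q hq h1 h2 h3 h4
end

section
/- Let B = (T, D, λ) be an upwards closed quasi-bush containing no coat hangers, and let w be a node of T. Then every node v ∈ OUT(w, B) with v ≠ w is a child of w in T. -/
variable {N : Type*}

/-- `u` is a leaf of the rooted tree given by the parent function: no other
node has `u` as its parent. -/
def IsLeafP (parent : N → N) (u : N) : Prop := ∀ y, parent y = u → y = u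

/-- `w` is an ancestor of `v` (every node is an ancestor of itself). -/
def Anc (parent : N → N) (w v : N) : Prop :=
  Relation.ReflTransGen (fun a b => b = parent a) v w

/-- A quasi-bush: a rooted tree (given by a parent function), a set of
pointers from leaves to nodes (every leaf points to the root), and labels on
the pointers (`lab u w` means the pointer `(u,w)` is labeled `1`). -/
structure QuasiBush (N : Type*) where
  root : N
  parent : N → N
  parent_root : parent root = root
  reach_root : ∀ x, Anc parent root x
  ptr : N → N → Prop
  lab : N → N → Prop
  ptr_leaf : ∀ u w, ptr u w → IsLeafP parent u
  ptr_root : ∀ u, IsLeafP parent u → ptr u root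

namespace QuasiBush

variable (B : QuasiBush N)

def IsLeaf (u : N) : Prop := IsLeafP B.parent u

/-- `w` is an ancestor of `v` in the tree of `B`. -/
def Anc' (w v : N) : Prop := Anc B.parent w v

/-- `w` is the connection point of the pair of distinct leaves `(u, v)`:
the lowest (deepest) ancestor of `v` to which `u` points. -/
def IsConn (u v w : N) : Prop :=
  B.IsLeaf u ∧ B.IsLeaf v ∧ u ≠ v ∧ B.Anc' w v ∧ B.ptr u w ∧
    ∀ w', B.Anc' w' v → B.ptr u w' → B.Anc' w' w

/-- The arc relation of the directed graph `G(B)` represented by `B`. -/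
def GAdj (u v : N) : Prop := ∃ w, B.IsConn u v w ∧ B.lab u w

/-- `OUT(w, B)`: heads of arcs of `G(B)` whose connection point is `w`. -/
def OUT (w : N) : Set N := {v | ∃ u, B.IsConn u v w ∧ B.lab u w}

/-- `B` is upwards closed: pointers are closed under moving to ancestors. -/
def UpClosed : Prop := ∀ u w w', B.ptr u w → B.Anc' w' w → B.ptr u w'

/-- `B` has a coat hanger: a subtree `T(a)` rooted at a non-leaf, non-root
node `a` such that some leaf `v` positively points to the parent of `a` but
has no pointer into `T(a)`. -/
def HasCoatHanger : Prop :=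
  ∃ a v, a ≠ B.root ∧ ¬ B.IsLeaf a ∧ B.IsLeaf v ∧
    B.ptr v (B.parent a) ∧ B.lab v (B.parent a) ∧
    ∀ x, B.Anc' a x → ¬ B.ptr v x

end QuasiBush

lemma anc_iff_iterate (p : N → N) (w v : N) :
    Anc p w v ↔ ∃ k, p^[k] v = w := by
  constructor
  · intro h
    induction h with
    | refl => exact ⟨0, rfl⟩
    | tail h1 h2 ih =>
      obtain ⟨k, hk⟩ := ih
      exact ⟨k + 1, by rw [Function.iterate_succ_apply', hk]; exact h2.symm⟩
  · rintro ⟨k, rfl⟩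
    induction k with
    | zero => exact Relation.ReflTransGen.refl
    | succ n ih => exact ih.tail (Function.iterate_succ_apply' p n v)

lemma cycle_eq_root (p : N → N) (r a : N) (hr : p r = r) (c K : ℕ) (hc : 1 ≤ c)
    (hcyc : p^[c] a = a) (hK : p^[K] a = r) : a = r := by
  have h1 : ∀ n, p^[c * n] a = a := by
    intro n
    induction n with
    | zero => rfl
    | succ n ih => rw [Nat.mul_succ, Function.iterate_add_apply, hcyc, ih]
  have hle : K ≤ c * K := Nat.le_mul_of_pos_left K hc
  calc a = p^[c * K] a := (h1 K).symm
    _ = p^[(c * K - K) + K] a := by rw [Nat.sub_add_cancel hle]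
    _ = p^[c * K - K] (p^[K] a) := Function.iterate_add_apply ..
    _ = r := by rw [hK, Function.iterate_fixed hr]

/-- In an upwards closed quasi-bush without coat hangers, every node
`v ∈ OUT(w, B)` with `v ≠ w` is a child of `w`. -/
theorem out_mem_child (B : QuasiBush N) (hU : B.UpClosed)
    (hC : ¬ B.HasCoatHanger) (w v : N) (hv : v ∈ B.OUT w) (hne : v ≠ w) :
    B.parent v = w := by
  classical
  obtain ⟨u, ⟨hul, hvl, huv, hwv, hpuw, hmin⟩, hlab⟩ := hv
  set p := B.parent with hp
  -- fixed points of p equal root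
  have hfix : ∀ x, p x = x → x = B.root := by
    intro x hx
    obtain ⟨K, hK⟩ := (anc_iff_iterate p B.root x).mp (B.reach_root x)
    rw [Function.iterate_fixed hx] at hK
    exact hK
  obtain ⟨k, hk⟩ := (anc_iff_iterate p w v).mp hwv
  have hex : ∃ k, p^[k] v = w := ⟨k, hk⟩
  set k0 := Nat.find hex with hk0def
  have hk0 : p^[k0] v = w := Nat.find_spec hex
  have hk0pos : k0 ≠ 0 := by
    intro h; apply hne; rw [← hk0, h]; rfl
  set a := p^[k0 - 1] v with ha
  have hpa : p a = w := by
    rw [ha, ← Function.iterate_succ_apply' p (k0-1) v, Nat.succ_eq_add_one, Nat.sub_add_cancel (Nat.one_le_iff_ne_zero.mpr hk0pos), hk0]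
  have haw : a ≠ w := by
    intro h
    have : k0 ≤ k0 - 1 := Nat.find_le (by rw [← ha, h])
    omega
  by_cases hav : a = v
  · rw [← hav, hpa]
  -- a ≠ v, so k0 ≥ 2 and a has a child ≠ a
  · exfalso
    have hk1pos : k0 - 1 ≠ 0 := by
      intro h; apply hav; rw [ha, h]; rfl
    have haroot : a ≠ B.root := by
      intro h
      apply haw
      rw [← hpa, h, hp, B.parent_root, ← h]
    set b := p^[k0 - 2] v with hb
    have hpb : p b = a := by
      have : k0 - 2 + 1 = k0 - 1 := by omega
      rw [hb, ← Function.iterate_succ_apply' p (k0-2) v, Nat.succ_eq_add_one, this, ← ha]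
    have hba : b ≠ a := by
      intro h
      rw [h] at hpb
      exact haroot (hfix a hpb)
    have hanl : ¬ B.IsLeaf a := by
      intro h
      exact hba (h b hpb)
    -- u points to parent a = w, with the label
    have hptr : B.ptr u (B.parent a) := by rw [← hp, hpa]; exact hpuw
    have hlab' : B.lab u (B.parent a) := by rw [← hp, hpa]; exact hlab
    -- no coat hanger: u has a pointer into T(a)
    have hexptr : ∃ x, B.Anc' a x ∧ B.ptr u x := by
      by_contra hno
      push_neg at hno
      exact hC ⟨a, u, haroot, hanl, hul, hptr, hlab', fun x hx => hno x hx⟩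
    obtain ⟨x, hax, hpux⟩ := hexptr
    have hpua : B.ptr u a := hU u x a hpux hax
    have hav' : B.Anc' a v :=
      (anc_iff_iterate p a v).mpr ⟨k0 - 1, ha.symm⟩
    have haw' : B.Anc' a w := hmin a hav' hpua
    obtain ⟨m, hm⟩ := (anc_iff_iterate p a w).mp haw'
    have hcyc : p^[m + 1] a = a := by
      rw [Function.iterate_succ_apply, hpa, hm]
    obtain ⟨K, hK⟩ := (anc_iff_iterate p B.root a).mp (B.reach_root a)
    exact haroot (cycle_eq_root p B.root a B.parent_root (m + 1) K (by omega) hcyc hK)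
end
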